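/- For every real x ≥ 0, the function t ↦ g̃(t,x) is represented on the interval (0,2) by its Taylor series centered at t₀ = 1: for every t ∈ (0,2), the series ∑_{n=0}^{∞} (g̃^{(n)}(1,x)/n!)·(t−1)^n converges and its sum equals g̃(t,x). -/

import Mathlib

/-!
`s ↦ g̃(s,x)` is the restriction to `(0,∞)` of `z ↦ z^{-1/2} e^{-x²/z}`, which is holomorphic on
the slit plane and hence on the disc `|z - 1| < 1`. There the complex Taylor series at `1`
converges to the function, and its coefficients are real: by induction, the iterated complex
derivatives at real points are the iterated real derivatives.
-/

noncomputable def gTilde (t x : ℝ) : ℝ := t ^ (-(1 / 2) : ℝ) * Real.exp (-x ^ 2 / t)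

open Complex

theorem HasDerivAt.of_ofReal_comp {g : ℝ → ℝ} {c : ℂ} {t : ℝ}
    (h : HasDerivAt (fun y => (g y : ℂ)) c t) : HasDerivAt g c.re t ∧ (c.re : ℂ) = c := by
  have hre : HasDerivAt g c.re t := by
    simpa [Function.comp_def] using reCLM.hasFDerivAt.comp_hasDerivAt t h
  exact ⟨hre, hre.ofReal_comp.unique h⟩

theorem iteratedDeriv_ofReal_eq_of_differentiableOn {F : ℂ → ℂ} {f : ℝ → ℝ} {U : Set ℂ}
    {S : Set ℝ} (hF : DifferentiableOn ℂ F U) (hU : IsOpen U) (hS : IsOpen S)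
    (hSU : ∀ t ∈ S, (t : ℂ) ∈ U) (hFf : ∀ t ∈ S, F t = ((f t : ℝ) : ℂ)) (n : ℕ) :
    ∀ t ∈ S, iteratedDeriv n F t = ((iteratedDeriv n f t : ℝ) : ℂ) := by
  induction n with
  | zero => simpa using hFf
  | succ n ih =>
    intro t ht
    have hFn : DifferentiableAt ℂ (iteratedDeriv n F) t := by
      rw [iteratedDeriv_eq_iterate]
      exact ((hF.analyticOnNhd hU).iterated_deriv n _ (hSU t ht)).differentiableAt
    have hf' : HasDerivAt (fun y : ℝ => ((iteratedDeriv n f y : ℝ) : ℂ))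
        (iteratedDeriv (n + 1) F t) t := by
      rw [iteratedDeriv_succ]
      exact hFn.hasDerivAt.comp_ofReal.congr_of_eventuallyEq <|
        Filter.eventuallyEq_of_mem (hS.mem_nhds ht) fun y hy => (ih y hy).symm
    obtain ⟨hre, hreal⟩ := hf'.of_ofReal_comp
    rw [iteratedDeriv_succ (f := f), hre.deriv, hreal]

open Nat in
theorem Real.hasSum_taylorSeries_of_differentiableOn_ball {f : ℝ → ℝ} {F : ℂ → ℂ} {c r : ℝ}
    (hF : DifferentiableOn ℂ F (Metric.ball (c : ℂ) r))
    (hFf : ∀ t ∈ Metric.ball c r, F t = ((f t : ℝ) : ℂ)) {t : ℝ} (ht : t ∈ Metric.ball c r) :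
    HasSum (fun n => iteratedDeriv n f c / n ! * (t - c) ^ n) (f t) := by
  have hball : ∀ s ∈ Metric.ball c r, (s : ℂ) ∈ Metric.ball (c : ℂ) r := by
    intro s hs
    rwa [Metric.mem_ball, Complex.isometry_ofReal.dist_eq]
  have hderiv := iteratedDeriv_ofReal_eq_of_differentiableOn hF Metric.isOpen_ball
    Metric.isOpen_ball hball hFf
  have hc : c ∈ Metric.ball c r := Metric.mem_ball_self (Metric.pos_of_mem_ball ht)
  have H := Complex.hasSum_taylorSeries_on_ball hF (hball t ht)
  simp only [hFf t ht, hderiv _ c hc, smul_eq_mul] at H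
  refine hasSum_ofReal.mp (H.congr_fun fun n => ?_)
  push_cast
  ring

noncomputable def gTildeComplex (x : ℝ) (z : ℂ) : ℂ := z ^ (-(1 / 2) : ℂ) * exp (-(x : ℂ) ^ 2 / z)

theorem differentiableOn_gTildeComplex (x : ℝ) :
    DifferentiableOn ℂ (gTildeComplex x) slitPlane := fun _ hz =>
  ((differentiableAt_id.cpow_const hz).mul
    (differentiableAt_const _ |>.div differentiableAt_id (slitPlane_ne_zero hz)).cexp)
    |>.differentiableWithinAt

theorem gTildeComplex_ofReal (x : ℝ) {t : ℝ} (ht : 0 < t) :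
    gTildeComplex x t = ((gTilde t x : ℝ) : ℂ) := by
  simp only [gTildeComplex, gTilde, ofReal_mul, ofReal_cpow ht.le, ofReal_exp]
  push_cast
  ring_nf

theorem stmt_7_general (x : ℝ) (t : ℝ) (ht : t ∈ Set.Ioo (0 : ℝ) 2) :
    HasSum
      (fun n : ℕ => iteratedDeriv n (fun s => gTilde s x) 1 / (n.factorial : ℝ) * (t - 1) ^ n)
      (gTilde t x) := by
  have hball : Metric.ball (1 : ℝ) 1 = Set.Ioo 0 2 := by norm_num [Real.ball_eq_Ioo]
  rw [← hball] at ht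
  refine Real.hasSum_taylorSeries_of_differentiableOn_ball
    (by simpa using (differentiableOn_gTildeComplex x).mono ball_one_subset_slitPlane)
    (fun s hs => gTildeComplex_ofReal x ?_) ht
  rw [hball] at hs
  exact hs.1

/-- For every `x ≥ 0` and every `t ∈ (0,2)`, the Taylor series of `t ↦ g̃(t,x)` centered
at `t₀ = 1` converges and its sum equals `g̃(t,x)`. -/
theorem stmt_7 (x : ℝ) (hx : 0 ≤ x) (t : ℝ) (ht : t ∈ Set.Ioo (0 : ℝ) 2) :
    HasSum
      (fun n : ℕ => iteratedDeriv n (fun s => gTilde s x) 1 / (n.factorial : ℝ) * (t - 1) ^ n)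
      (gTilde t x) :=
  stmt_7_general x t ht
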